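/- Let (T, τ) be a Λ-linear (Q,I)-contraction datum. Then for every representation M of Q over Λ, the map sending q ∈ Q to τ(q)_{M|_I} ∘ T(λ_{q,M}) is a group homomorphism from Q to the group of Λ-linear automorphisms of T(M|_I), and every element of I is sent to the identity; consequently this map induces an action of the quotient group Q/I on the Λ-module T(M|_I). -/

import Mathlib

open CategoryTheory

noncomputable section ContractionSetup

variable (Λ : Type) [CommRing Λ] {Q : Type} [Group Q]

/-- Conjugation by `q : Q` as a monoid homomorphism `I →* I`, for `I` a normal subgroup of `Q`. -/
def conjSubgroupHom (I : Subgroup Q) [I.Normal] (q : Q) : ↥I →* ↥I where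
  toFun t := ⟨q * ↑t * q⁻¹, Subgroup.Normal.conj_mem ‹I.Normal› ↑t t.2 q⟩
  map_one' := by ext; simp
  map_mul' t₁ t₂ := by ext; push_cast; group

variable (I : Subgroup Q) [I.Normal]

/-- The representation `q*M`: same underlying `Λ`-module as `M`, with `t : I` acting as
`q * t * q⁻¹` acts on `M`. -/
def conjRep (q : Q) (M : Rep.{0} Λ ↥I) : Rep.{0} Λ ↥I :=
  Rep.of (M.ρ.comp (conjSubgroupHom I q))

/-- The `Λ`-linear functor `q* : Rep Λ I ⥤ Rep Λ I`. -/
def conjFunctor (q : Q) : Rep.{0} Λ ↥I ⥤ Rep.{0} Λ ↥I where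
  obj M := conjRep Λ I q M
  map f := ConcreteCategory.ofHom
    ⟨f.hom.toLinearMap, fun t => f.hom.isIntertwining' (conjSubgroupHom I q t)⟩

/-- The canonical identification `q₂*(q₁*M) ⟶ (q₁q₂)*M` (the identity map on underlying
modules), realizing the equality of functors `(q₁q₂)* = q₂* ∘ q₁*`. -/
def conjRepMulHom (q₁ q₂ : Q) (M : Rep.{0} Λ ↥I) :
    conjRep Λ I q₂ (conjRep Λ I q₁ M) ⟶ conjRep Λ I (q₁ * q₂) M :=
  ConcreteCategory.ofHom ⟨LinearMap.id, fun t => by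
    have h : conjSubgroupHom I q₁ (conjSubgroupHom I q₂ t) = conjSubgroupHom I (q₁ * q₂) t := by
      ext
      simp only [conjSubgroupHom, MonoidHom.coe_mk, OneHom.coe_mk]
      group
    ext x
    show M.ρ (conjSubgroupHom I q₁ (conjSubgroupHom I q₂ t)) x =
      M.ρ (conjSubgroupHom I (q₁ * q₂) t) x
    rw [h]⟩

/-- The restriction `M|_I` to `I` of a representation `M` of `Q`. -/
def resRep (M : Rep.{0} Λ Q) : Rep.{0} Λ ↥I :=
  Rep.of (M.ρ.comp I.subtype)

/-- For `M` a representation of `Q` and `q : Q`, the `I`-equivariant `Λ`-linear map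
`λ_{q,M} : M|_I ⟶ q*(M|_I)` given by `m ↦ q • m`. -/
def lambdaRes (M : Rep.{0} Λ Q) (q : Q) :
    resRep Λ I M ⟶ conjRep Λ I q (resRep Λ I M) :=
  ConcreteCategory.ofHom ⟨M.ρ q, fun t => by
    ext (x : M)
    show M.ρ q (M.ρ (I.subtype t) x) = M.ρ (I.subtype (conjSubgroupHom I q t)) (M.ρ q x)
    have h : I.subtype (conjSubgroupHom I q t) * q = q * I.subtype t := by
      simp [conjSubgroupHom]
    rw [← Module.End.mul_apply, ← Module.End.mul_apply, ← map_mul, ← map_mul, h]⟩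

/-- For `t ∈ I` and `M : Rep Λ I`, the component at `M` of the natural transformation
`λ_t : id ⟶ t*`, given by the action of `t` on `M`. -/
def lambdaI (t : ↥I) (M : Rep.{0} Λ ↥I) : M ⟶ conjRep Λ I (↑t : Q) M :=
  ConcreteCategory.ofHom ⟨M.ρ t, fun u => by
    ext x
    show M.ρ t (M.ρ u x) = M.ρ (conjSubgroupHom I (↑t : Q) u) (M.ρ t x)
    have h : conjSubgroupHom I (↑t : Q) u * t = t * (show ↥I from u) := by
      ext
      simp only [conjSubgroupHom, MonoidHom.coe_mk, OneHom.coe_mk, Subgroup.coe_mul]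
      group
    rw [← Module.End.mul_apply, ← Module.End.mul_apply, ← map_mul, ← map_mul, h]⟩

end ContractionSetup

/-! Since `λ_{q₁q₂,M} = q₂*(λ_{q₁,M}) ∘ λ_{q₂,M}`, condition (a) and the naturality of `τ(q₂)`
make `q ↦ τ(q)_{M|_I} ∘ T(λ_{q,M})` multiplicative; for `t ∈ I`, `λ_{t,M}` is the component of
`λ_t` at `M|_I`, so condition (b) sends `t` to the identity. A monoid homomorphism from a group
into `End T(M|_I)` lands in the automorphisms, and being trivial on `I` it factors through
`Q/I`. -/

section InducedAction

variable {Λ : Type} [CommRing Λ] {Q : Type} [Group Q] {I : Subgroup Q} [I.Normal]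

theorem lambdaRes_mul (M : Rep.{0} Λ Q) (q₁ q₂ : Q) :
    lambdaRes Λ I M (q₁ * q₂) =
      lambdaRes Λ I M q₂ ≫ (conjFunctor Λ I q₂).map (lambdaRes Λ I M q₁) ≫
        conjRepMulHom Λ I q₁ q₂ (resRep Λ I M) := by
  apply Rep.hom_ext
  apply Representation.IntertwiningMap.ext
  exact map_mul M.ρ q₁ q₂

variable {T : Rep.{0} Λ ↥I ⥤ ModuleCat Λ} (τ : ∀ q : Q, conjFunctor Λ I q ⋙ T ⟶ T)

def inducedEnd (M : Rep.{0} Λ Q) (q : Q) :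
    Module.End Λ (T.obj (resRep Λ I M)) :=
  (T.map (lambdaRes Λ I M q) ≫ (τ q).app (resRep Λ I M)).hom

theorem inducedEnd_mul
    (tau_mul : ∀ (q₁ q₂ : Q) (M : Rep.{0} Λ ↥I),
      T.map (conjRepMulHom Λ I q₁ q₂ M) ≫ (τ (q₁ * q₂)).app M =
        (τ q₂).app (conjRep Λ I q₁ M) ≫ (τ q₁).app M)
    (M : Rep.{0} Λ Q) (q₁ q₂ : Q) :
    inducedEnd τ M (q₁ * q₂) = inducedEnd τ M q₁ * inducedEnd τ M q₂ := by
  have naturality := (τ q₂).naturality (lambdaRes Λ I M q₁)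
  simp only [Functor.comp_map] at naturality
  have factorization : T.map (lambdaRes Λ I M (q₁ * q₂)) ≫ (τ (q₁ * q₂)).app (resRep Λ I M) =
      (T.map (lambdaRes Λ I M q₂) ≫ (τ q₂).app (resRep Λ I M)) ≫
        T.map (lambdaRes Λ I M q₁) ≫ (τ q₁).app (resRep Λ I M) := by
    erw [lambdaRes_mul, T.map_comp, T.map_comp, Category.assoc, Category.assoc, tau_mul,
      reassoc_of% naturality]
    rfl
  exact congrArg ModuleCat.Hom.hom factorization

theorem inducedEnd_of_mem
    (tau_lambda : ∀ (t : ↥I) (M : Rep.{0} Λ ↥I),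
      T.map (lambdaI Λ I t M) ≫ (τ (↑t : Q)).app M = 𝟙 (T.obj M))
    (M : Rep.{0} Λ Q) {q : Q} (hq : q ∈ I) :
    inducedEnd τ M q = 1 :=
  congrArg ModuleCat.Hom.hom (tau_lambda ⟨q, hq⟩ (resRep Λ I M))

def inducedEndHom
    (tau_mul : ∀ (q₁ q₂ : Q) (M : Rep.{0} Λ ↥I),
      T.map (conjRepMulHom Λ I q₁ q₂ M) ≫ (τ (q₁ * q₂)).app M =
        (τ q₂).app (conjRep Λ I q₁ M) ≫ (τ q₁).app M)
    (tau_lambda : ∀ (t : ↥I) (M : Rep.{0} Λ ↥I),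
      T.map (lambdaI Λ I t M) ≫ (τ (↑t : Q)).app M = 𝟙 (T.obj M))
    (M : Rep.{0} Λ Q) : Q →* Module.End Λ (T.obj (resRep Λ I M)) where
  toFun := inducedEnd τ M
  map_one' := inducedEnd_of_mem τ tau_lambda M I.one_mem
  map_mul' := inducedEnd_mul τ tau_mul M

end InducedAction

theorem contraction_inducedAction_general (Λ : Type) [CommRing Λ] {Q : Type} [Group Q]
    (I : Subgroup Q) [I.Normal]
    (T : Rep.{0} Λ ↥I ⥤ ModuleCat Λ)
    (τ : ∀ q : Q, conjFunctor Λ I q ⋙ T ⟶ T)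
    -- condition (a): `τ(q₁q₂)_M = τ(q₁)_M ∘ τ(q₂)_{q₁*M}` under the canonical identification
    -- `(q₁q₂)*M = q₂*(q₁*M)`
    (tau_mul : ∀ (q₁ q₂ : Q) (M : Rep.{0} Λ ↥I),
      T.map (conjRepMulHom Λ I q₁ q₂ M) ≫ (τ (q₁ * q₂)).app M =
        (τ q₂).app (conjRep Λ I q₁ M) ≫ (τ q₁).app M)
    -- condition (b): `τ(t) ∘ T(λ_t) = id` for every `t ∈ I`
    (tau_lambda : ∀ (t : ↥I) (M : Rep.{0} Λ ↥I),
      T.map (lambdaI Λ I t M) ≫ (τ (↑t : Q)).app M = 𝟙 (T.obj M))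
    (M : Rep.{0} Λ Q) :
    ∃ φ : Q →* (↥(T.obj (resRep Λ I M)) ≃ₗ[Λ] ↥(T.obj (resRep Λ I M))),
      (∀ q : Q, ⇑(φ q) =
        ⇑(T.map (lambdaRes Λ I M q) ≫ (τ q).app (resRep Λ I M))) ∧
      (∀ q : Q, q ∈ I → φ q = 1) ∧
      ∃ ψ : Q ⧸ I →* (↥(T.obj (resRep Λ I M)) ≃ₗ[Λ] ↥(T.obj (resRep Λ I M))),
        ψ.comp (QuotientGroup.mk' I) = φ := by
  let φ := (LinearMap.GeneralLinearGroup.generalLinearEquiv Λ _).toMonoidHom.comp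
    (inducedEndHom τ tau_mul tau_lambda M).toHomUnits
  have trivial_on_I : ∀ q : Q, q ∈ I → φ q = 1 := fun q hq =>
    LinearEquiv.ext (LinearMap.congr_fun (inducedEnd_of_mem τ tau_lambda M hq))
  have le_ker : I ≤ φ.ker := fun q hq => MonoidHom.mem_ker.mpr (trivial_on_I q hq)
  exact ⟨φ, fun q => rfl, trivial_on_I, QuotientGroup.lift I φ le_ker,
    QuotientGroup.lift_comp_mk' I φ le_ker⟩

/-- Let `(T, τ)` be a `Λ`-linear `(Q,I)`-contraction datum. Then for every
representation `M` of `Q` over `Λ`, the map sending `q : Q` to `τ(q)_{M|_I} ∘ T(λ_{q,M})` is a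
group homomorphism from `Q` to the group of `Λ`-linear automorphisms of `T(M|_I)`, every
element of `I` is sent to the identity, and consequently this map induces an action of the
quotient group `Q/I` on the `Λ`-module `T(M|_I)`. -/
theorem contraction_inducedAction (Λ : Type) [CommRing Λ] {Q : Type} [Group Q]
    (I : Subgroup Q) [I.Normal]
    (T : Rep.{0} Λ ↥I ⥤ ModuleCat Λ) [T.Additive] [T.Linear Λ]
    (τ : ∀ q : Q, conjFunctor Λ I q ⋙ T ⟶ T)
    -- condition (a): `τ(q₁q₂)_M = τ(q₁)_M ∘ τ(q₂)_{q₁*M}` under the canonical identification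
    -- `(q₁q₂)*M = q₂*(q₁*M)`
    (tau_mul : ∀ (q₁ q₂ : Q) (M : Rep.{0} Λ ↥I),
      T.map (conjRepMulHom Λ I q₁ q₂ M) ≫ (τ (q₁ * q₂)).app M =
        (τ q₂).app (conjRep Λ I q₁ M) ≫ (τ q₁).app M)
    -- condition (b): `τ(t) ∘ T(λ_t) = id` for every `t ∈ I`
    (tau_lambda : ∀ (t : ↥I) (M : Rep.{0} Λ ↥I),
      T.map (lambdaI Λ I t M) ≫ (τ (↑t : Q)).app M = 𝟙 (T.obj M))
    (M : Rep.{0} Λ Q) :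
    ∃ φ : Q →* (↥(T.obj (resRep Λ I M)) ≃ₗ[Λ] ↥(T.obj (resRep Λ I M))),
      (∀ q : Q, ⇑(φ q) =
        ⇑(T.map (lambdaRes Λ I M q) ≫ (τ q).app (resRep Λ I M))) ∧
      (∀ q : Q, q ∈ I → φ q = 1) ∧
      ∃ ψ : Q ⧸ I →* (↥(T.obj (resRep Λ I M)) ≃ₗ[Λ] ↥(T.obj (resRep Λ I M))),
        ψ.comp (QuotientGroup.mk' I) = φ :=
  contraction_inducedAction_general Λ I T τ tau_mul tau_lambda M
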